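/- For ε-optimal tails, the robust value satisfies U*_t(y) ≥ W_t(y) − ε·C for a constant C depending on bounds, and since ε is arbitrary, U*_t = W_t (verification theorem for the adaptive robust Bellman equations in a simplified two-period model). -/
import Mathlib


open MeasureTheory

/-- Verification theorem for the adaptive robust Bellman equations in a simplified
two-period model: with `W₁(y) = e^{γ r₁(y)}` and
`W₀(y) = max_a inf_θ ∫ W₁(y') e^{γ r₀(y,a)} Q(dy'|a,θ)`, the robust value
`U*₀(y)`, defined as the sup over measurable controls of the inf over measurable
parameter selections of `∫ e^{γ(r₀(y,a(y)) + r₁(y'))} Q(dy'|a(y),θ(y))`,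
coincides with `W₀(y)`. -/
theorem stmt_14 {E : Type*} [MeasurableSpace E] {A : Type*} [Finite A] [Nonempty A]
    [MeasurableSpace A] {Θ : Type*} [TopologicalSpace Θ] [CompactSpace Θ] [Nonempty Θ]
    [MeasurableSpace Θ]
    (Q : A → Θ → Measure E) (hQ : ∀ a θ, IsProbabilityMeasure (Q a θ))
    (R : ℝ) (hR : 0 ≤ R)
    (r0 : E → A → ℝ) (hr0m : ∀ a, Measurable (fun y => r0 y a))
    (hr0 : ∀ y a, 0 ≤ r0 y a ∧ r0 y a ≤ R)
    (r1 : E → ℝ) (hr1m : Measurable r1) (hr1 : ∀ y, 0 ≤ r1 y ∧ r1 y ≤ R)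
    (γ : ℝ) (hγ : 0 < γ)
    (W1 : E → ℝ) (hW1 : ∀ y, W1 y = Real.exp (γ * r1 y))
    (W0 : E → ℝ) (hW0 : ∀ y, W0 y = ⨆ a : A, ⨅ θ : Θ,
      ∫ y', W1 y' * Real.exp (γ * r0 y a) ∂(Q a θ))
    (U0star : E → ℝ)
    (hU0 : ∀ y, U0star y = ⨆ af : {f : E → A // Measurable f},
      ⨅ θf : {f : E → Θ // Measurable f},
        ∫ y', Real.exp (γ * (r0 y (af.1 y) + r1 y')) ∂(Q (af.1 y) (θf.1 y)))
    (y : E) :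
    U0star y = W0 y := by
  rw [hU0, hW0]
  have hint : ∀ (a : A) (θ : Θ),
      (∫ y', Real.exp (γ * (r0 y a + r1 y')) ∂(Q a θ))
      = ∫ y', W1 y' * Real.exp (γ * r0 y a) ∂(Q a θ) := by
    intro a θ
    refine integral_congr_ae (Filter.Eventually.of_forall fun y' => ?_)
    simp only [hW1, ← Real.exp_add]
    congr 1
    ring
  have hΘ : ∀ (a : A),
      (⨅ θf : {f : E → Θ // Measurable f},
        ∫ y', Real.exp (γ * (r0 y a + r1 y')) ∂(Q a (θf.1 y)))
      = ⨅ θ : Θ, ∫ y', Real.exp (γ * (r0 y a + r1 y')) ∂(Q a θ) := by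
    intro a
    rw [iInf, iInf]
    congr 1
    ext v
    constructor
    · rintro ⟨⟨f, hf⟩, rfl⟩; exact ⟨f y, rfl⟩
    · rintro ⟨θ, rfl⟩; exact ⟨⟨fun _ => θ, measurable_const⟩, rfl⟩
  have step1 : (⨆ af : {f : E → A // Measurable f},
      ⨅ θf : {f : E → Θ // Measurable f},
        ∫ y', Real.exp (γ * (r0 y (af.1 y) + r1 y')) ∂(Q (af.1 y) (θf.1 y)))
      = ⨆ af : {f : E → A // Measurable f},
        ⨅ θ : Θ, ∫ y', Real.exp (γ * (r0 y (af.1 y) + r1 y')) ∂(Q (af.1 y) θ) := by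
    exact iSup_congr fun af => hΘ (af.1 y)
  rw [step1]
  have step2 : (⨆ af : {f : E → A // Measurable f},
        ⨅ θ : Θ, ∫ y', Real.exp (γ * (r0 y (af.1 y) + r1 y')) ∂(Q (af.1 y) θ))
      = ⨆ a : A, ⨅ θ : Θ, ∫ y', Real.exp (γ * (r0 y a + r1 y')) ∂(Q a θ) := by
    rw [iSup, iSup]
    congr 1
    ext v
    constructor
    · rintro ⟨⟨f, hf⟩, rfl⟩; exact ⟨f y, rfl⟩
    · rintro ⟨a, rfl⟩; exact ⟨⟨fun _ => a, measurable_const⟩, rfl⟩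
  rw [step2]
  exact iSup_congr fun a => iInf_congr fun θ => hint a θ
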